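/- arXiv:2409.12146 — 4 statements merged into one kernel-verified Lean document; each statement's English description precedes it below -/
import Mathlib

section
/- Let P₁ and P₂ be τ-periodic patterns with the same root H and the same head. Let t₁ = runend(P₁) - 1 and t₂ = runend(P₂) - 1. Then lcp(P₁, P₂) ≥ min(t₁, t₂); moreover, if type(P₁) ≠ type(P₂) or t₁ ≠ t₂, then P₁ ≠ P₂ and lcp(P₁, P₂) = min(t₁, t₂); and if type(P₁) = type(P₂) = -1 and t₁ ≠ t₂, then t₁ < t₂ if and only if P₁ ≺ P₂. -/
namespace LZ

variable {α : Type*}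

/-- `SubstrEq T i j ℓ`: the length-`ℓ` substrings of `T` (1-based positions)
starting at `i` and `j` are equal. -/
def SubstrEq (T : ℕ → α) (i j ℓ : ℕ) : Prop := ∀ t < ℓ, T (i + t) = T (j + t)

/-- `perP P ℓ`: the shortest period of the prefix `P[1..ℓ]` of the (1-based) pattern `P`. -/
noncomputable def perP (P : ℕ → α) (ℓ : ℕ) : ℕ :=
  sInf {p | 0 < p ∧ ∀ t, t + p < ℓ → P (1 + t) = P (1 + t + p)}

/-- A pattern `P` of length `m` is `τ`-periodic if `m ≥ 3τ - 1` and
`per(P[1..3τ-1]) ≤ τ/3`. -/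
noncomputable def IsPeriodicPat (τ : ℕ) (P : ℕ → α) (m : ℕ) : Prop :=
  3 * τ - 1 ≤ m ∧ 3 * perP P (3 * τ - 1) ≤ τ

/-- `runendP τ P m = 1 + p + lcp(P[1..m], P[1+p..m])` where `p = per(P[1..3τ-1])`. -/
noncomputable def runendP (τ : ℕ) (P : ℕ → α) (m : ℕ) : ℕ :=
  1 + perP P (3 * τ - 1) +
    sSup {ℓ | perP P (3 * τ - 1) + ℓ ≤ m ∧
      ∀ t < ℓ, P (1 + t) = P (1 + perP P (3 * τ - 1) + t)}

/-- `rotP P p δ`: the length-`p` substring `P[1+δ..1+δ+p)` (a rotation of `P[1..p]`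
when `P` has period `p`). -/
def rotP (P : ℕ → α) (p δ : ℕ) : List α := (List.range p).map fun t => P (1 + δ + t)

/-- The Lyndon root of a `τ`-periodic pattern `P`: the lexicographically smallest
rotation `P[1+δ..1+δ+p)`, `δ ∈ [0..p)`, where `p = per(P[1..3τ-1])`. -/
noncomputable def rootP [LinearOrder α] (τ : ℕ) (P : ℕ → α) : List α :=
  ((List.range (perP P (3 * τ - 1))).map (rotP P (perP P (3 * τ - 1)))).foldr min
    (rotP P (perP P (3 * τ - 1)) 0)

/-- `headP τ P = |H'|` where `P[1..runend) = H' H^k H''` with `H = rootP τ P`: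
the smallest offset `s` at which the Lyndon root occurs. -/
noncomputable def headP [LinearOrder α] (τ : ℕ) (P : ℕ → α) : ℕ :=
  sInf {s | rotP P (perP P (3 * τ - 1)) s = rootP τ P}

/-- `tailP τ P m = |H''|` in the factorization `P[1..runend) = H' H^k H''`. -/
noncomputable def tailP [LinearOrder α] (τ : ℕ) (P : ℕ → α) (m : ℕ) : ℕ :=
  (runendP τ P m - 1 - headP τ P) % perP P (3 * τ - 1)

/-- `runendfullP τ P m = runendP τ P m - tailP τ P m`. -/
noncomputable def runendfullP [LinearOrder α] (τ : ℕ) (P : ℕ → α) (m : ℕ) : ℕ :=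
  runendP τ P m - tailP τ P m

/-- `expP τ P m = k` in the factorization `P[1..runend) = H' H^k H''`. -/
noncomputable def expP [LinearOrder α] (τ : ℕ) (P : ℕ → α) (m : ℕ) : ℕ :=
  (runendP τ P m - 1 - headP τ P) / perP P (3 * τ - 1)

/-- `typePosP τ P m`: the type of `P` is `+1`, i.e. `runend(P) ≤ |P|` and
`P[runend(P)] ≻ P[runend(P) - p]`. The type is `-1` iff this fails. -/
noncomputable def typePosP [LinearOrder α] (τ : ℕ) (P : ℕ → α) (m : ℕ) : Prop :=
  runendP τ P m ≤ m ∧ P (runendP τ P m - perP P (3 * τ - 1)) < P (runendP τ P m)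

/-- Length of the longest common prefix of patterns `P[1..m₁]` and `Q[1..m₂]`. -/
noncomputable def lcpP (P Q : ℕ → α) (m₁ m₂ : ℕ) : ℕ :=
  sSup {ℓ | ℓ ≤ m₁ ∧ ℓ ≤ m₂ ∧ ∀ t < ℓ, P (1 + t) = Q (1 + t)}

/-- The pattern `P[1..m]` as a list. -/
def toListP (P : ℕ → α) (m : ℕ) : List α := (List.range m).map fun t => P (1 + t)

/-- The suffix `T[j..]` of the text, viewed as a 1-based pattern. -/
def sufP (T : ℕ → α) (j : ℕ) : ℕ → α := fun k => T (j + k - 1)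

/-- `Rset τ n T`: positions `i ∈ [1..n-3τ+2]` with `per(T[i..i+3τ-1)) ≤ τ/3`. -/
noncomputable def Rset (τ n : ℕ) (T : ℕ → α) : Set ℕ :=
  {i | 1 ≤ i ∧ i + 3 * τ ≤ n + 2 ∧ 3 * perP (sufP T i) (3 * τ - 1) ≤ τ}

/-- The end `e(j)` of the `τ`-run containing position `j ∈ Rset τ n T`:
`e(j) = j + p + lcp(T[j..n], T[j+p..n])`. -/
noncomputable def runEndT (τ n : ℕ) (T : ℕ → α) (j : ℕ) : ℕ :=
  j + runendP τ (sufP T j) (n + 1 - j) - 1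

/-- The Lyndon root of the `τ`-run at text position `j`. -/
noncomputable def rootT [LinearOrder α] (τ : ℕ) (T : ℕ → α) (j : ℕ) : List α :=
  rootP τ (sufP T j)

/-- `head` of the `τ`-run at text position `j`. -/
noncomputable def headT [LinearOrder α] (τ : ℕ) (T : ℕ → α) (j : ℕ) : ℕ :=
  headP τ (sufP T j)

/-- `tail` of the `τ`-run at text position `j`. -/
noncomputable def tailT [LinearOrder α] (τ n : ℕ) (T : ℕ → α) (j : ℕ) : ℕ :=
  tailP τ (sufP T j) (n + 1 - j)

/-- The full run end `efull(j) = e(j) - tail(j)` of the `τ`-run at position `j`. -/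
noncomputable def runEndFullT [LinearOrder α] (τ n : ℕ) (T : ℕ → α) (j : ℕ) : ℕ :=
  j + runendfullP τ (sufP T j) (n + 1 - j) - 1

/-- The exponent of the `τ`-run at text position `j`. -/
noncomputable def expT [LinearOrder α] (τ n : ℕ) (T : ℕ → α) (j : ℕ) : ℕ :=
  expP τ (sufP T j) (n + 1 - j)

/-- The type of text position `j` is `+1`. (Type is `-1` iff this fails.) -/
noncomputable def typePosT [LinearOrder α] (τ n : ℕ) (T : ℕ → α) (j : ℕ) : Prop :=
  typePosP τ (sufP T j) (n + 1 - j)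

/-- Starting positions of maximal blocks of `Rset`-positions (starts of maximal `τ`-runs). -/
noncomputable def Rprim (τ n : ℕ) (T : ℕ → α) : Set ℕ :=
  {j | j ∈ Rset τ n T ∧ j - 1 ∉ Rset τ n T}

/-- Positions of `Rset` of type `-1`. -/
noncomputable def RsetMinus [LinearOrder α] (τ n : ℕ) (T : ℕ → α) : Set ℕ :=
  {j | j ∈ Rset τ n T ∧ ¬ typePosT τ n T j}

/-- `OccSub T n i ℓ`: the set of starting positions of occurrences of the
substring `T[i..i+ℓ)` in the length-`n` text `T`. -/
def OccSub (T : ℕ → α) (n i ℓ : ℕ) : Set ℕ :=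
  {q | 1 ≤ q ∧ q + ℓ ≤ n + 1 ∧ SubstrEq T q i ℓ}

/-- `RMinMinus τ n T`: positions `j ∈ R⁻(τ,T)` with
`j = min (Occ(T[j..e(j)), T) ∩ R⁻(τ,T))`. -/
noncomputable def RMinMinus [LinearOrder α] (τ n : ℕ) (T : ℕ → α) : Set ℕ :=
  {j | j ∈ RsetMinus τ n T ∧
    j = sInf (OccSub T n j (runEndT τ n T j - j) ∩ RsetMinus τ n T)}

/-- `eminT τ n T j = max {j' ∈ [j..n] : [j..j') ⊆ RMinMinus τ n T}`. -/
noncomputable def eminT [LinearOrder α] (τ n : ℕ) (T : ℕ → α) (j : ℕ) : ℕ :=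
  sSup {j' | j ≤ j' ∧ j' ≤ n ∧ ∀ t, j ≤ t → t < j' → t ∈ RMinMinus τ n T}

/-- `S` is a `τ`-synchronizing set of the length-`n` text `T`:
`S ⊆ [1..n-2τ+1]`, consistency (equal length-`2τ` contexts give equal membership),
and density (`[i..i+τ) ∩ S ≠ ∅` iff `i ∉ Rset τ n T`, for `i ∈ [1..n-3τ+2]`). -/
noncomputable def SyncSet (τ n : ℕ) (T : ℕ → α) (S : Set ℕ) : Prop :=
  (∀ s ∈ S, 1 ≤ s ∧ s + 2 * τ ≤ n + 1) ∧
  (∀ i j, 1 ≤ i → i + 2 * τ ≤ n + 1 → 1 ≤ j → j + 2 * τ ≤ n + 1 →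
    SubstrEq T i j (2 * τ) → (i ∈ S ↔ j ∈ S)) ∧
  (∀ i, 1 ≤ i → i + 3 * τ ≤ n + 2 →
    ((Set.Ico i (i + τ) ∩ S).Nonempty ↔ i ∉ Rset τ n T))

/-- `succS S j = min {j' ∈ S : j' ≥ j}`. -/
noncomputable def succS (S : Set ℕ) (j : ℕ) : ℕ := sInf {j' | j' ∈ S ∧ j ≤ j'}

end LZ

namespace LZHelper

open LZ

variable {α : Type*} {β : Type*}

lemma foldr_min_mem [LinearOrder β] (l : List β) (a : β) :
    l.foldr min a = a ∨ l.foldr min a ∈ l := by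
  induction l with
  | nil => exact Or.inl rfl
  | cons x xs ih =>
    simp only [List.foldr_cons]
    rcases min_cases x (xs.foldr min a) with ⟨h, _⟩ | ⟨h, _⟩
    · exact Or.inr (by simp [h])
    · rcases ih with h' | h'
      · exact Or.inl (h.trans h')
      · exact Or.inr (by simp [h, h'])

lemma toListP_length (P : ℕ → α) (m : ℕ) : (toListP P m).length = m := by
  simp [toListP]

lemma toListP_getElem? (P : ℕ → α) {m i : ℕ} (h : i < m) :
    (toListP P m)[i]? = some (P (1 + i)) := by
  simp [toListP, h]

lemma toListP_ne_of_len (P₁ P₂ : ℕ → α) {m₁ m₂ : ℕ} (h : m₁ ≠ m₂) :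
    toListP P₁ m₁ ≠ toListP P₂ m₂ := by
  intro he
  apply h
  have := congrArg List.length he
  simpa [toListP_length] using this

lemma toListP_ne_of_entry (P₁ P₂ : ℕ → α) {m₁ m₂ k : ℕ} (h1 : k < m₁) (h2 : k < m₂)
    (h : P₁ (1 + k) ≠ P₂ (1 + k)) : toListP P₁ m₁ ≠ toListP P₂ m₂ := by
  intro he
  apply h
  have := congrArg (fun l => l[k]?) he
  simp only [toListP_getElem? _ h1, toListP_getElem? _ h2] at this
  exact Option.some_injective _ this

lemma lcpP_ge (P₁ P₂ : ℕ → α) {m₁ m₂ k : ℕ}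
    (hag : ∀ u < k, P₁ (1 + u) = P₂ (1 + u)) (h1 : k ≤ m₁) (h2 : k ≤ m₂) :
    k ≤ lcpP P₁ P₂ m₁ m₂ := by
  apply le_csSup ⟨m₁, fun ℓ hℓ => hℓ.1⟩
  exact ⟨h1, h2, hag⟩

lemma lcpP_le (P₁ P₂ : ℕ → α) {m₁ m₂ k : ℕ}
    (hd : k = m₁ ∨ k = m₂ ∨ P₁ (1 + k) ≠ P₂ (1 + k)) :
    lcpP P₁ P₂ m₁ m₂ ≤ k := by
  apply csSup_le ⟨0, by simp [Set.mem_setOf_eq]⟩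
  intro ℓ hℓ
  obtain ⟨hℓ1, hℓ2, hℓ3⟩ := hℓ
  by_contra hc
  push_neg at hc
  rcases hd with rfl | rfl | hne
  · omega
  · omega
  · exact hne (hℓ3 k hc)

lemma lex_of_agree [LinearOrder β] :
    ∀ (k : ℕ) (l₁ l₂ : List β), (∀ i < k, l₁[i]? = l₂[i]?) →
      ((l₁.length = k ∧ k < l₂.length) ∨
        (∃ a b, l₁[k]? = some a ∧ l₂[k]? = some b ∧ a < b)) →
      List.Lex (· < ·) l₁ l₂ := by
  intro k
  induction k with
  | zero =>
    intro l₁ l₂ _ hd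
    rcases hd with ⟨hl1, hl2⟩ | ⟨a, b, ha, hb, hab⟩
    · have : l₁ = [] := List.length_eq_zero_iff.mp hl1
      subst this
      cases l₂ with
      | nil => simp at hl2
      | cons b t => exact List.Lex.nil
    · cases l₁ with
      | nil => simp at ha
      | cons x t₁ =>
        cases l₂ with
        | nil => simp at hb
        | cons y t₂ =>
          simp only [List.getElem?_cons_zero, Option.some.injEq] at ha hb
          subst ha; subst hb
          exact List.Lex.rel hab
  | succ k ih =>
    intro l₁ l₂ hag hd
    cases l₁ with
    | nil =>
      rcases hd with ⟨hl1, _⟩ | ⟨a, _, ha, _⟩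
      · simp at hl1
      · simp at ha
    | cons x t₁ =>
      cases l₂ with
      | nil =>
        rcases hd with ⟨_, hl2⟩ | ⟨_, b, _, hb, _⟩
        · simp at hl2
        · simp at hb
      | cons y t₂ =>
        have h0 := hag 0 (Nat.succ_pos k)
        simp only [List.getElem?_cons_zero, Option.some.injEq] at h0
        subst h0
        apply List.Lex.cons
        apply ih
        · intro i hi
          have := hag (i + 1) (by omega)
          simpa using this
        · rcases hd with ⟨hl1, hl2⟩ | ⟨a, b, ha, hb, hab⟩
          · left
            constructor
            · simpa using hl1
            · simpa using hl2
          · right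
            exact ⟨a, b, by simpa using ha, by simpa using hb, hab⟩

lemma perP_spec (τ : ℕ) (hτ : 1 ≤ τ) (P : ℕ → α) :
    0 < perP P (3 * τ - 1) ∧
      ∀ t, t + perP P (3 * τ - 1) < 3 * τ - 1 →
        P (1 + t) = P (1 + t + perP P (3 * τ - 1)) := by
  have hne : ({p | 0 < p ∧ ∀ t, t + p < 3 * τ - 1 → P (1 + t) = P (1 + t + p)} : Set ℕ).Nonempty :=
    ⟨3 * τ - 1, by omega, fun t ht => absurd ht (by omega)⟩
  exact Nat.sInf_mem hne

lemma rotP_length (P : ℕ → α) (p δ : ℕ) : (rotP P p δ).length = p := by simp [rotP]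

lemma rootP_eq_rot [LinearOrder α] (τ : ℕ) (P : ℕ → α) (hp : 0 < perP P (3 * τ - 1)) :
    ∃ δ < perP P (3 * τ - 1), rotP P (perP P (3 * τ - 1)) δ = rootP τ P := by
  rcases foldr_min_mem
      ((List.range (perP P (3 * τ - 1))).map (rotP P (perP P (3 * τ - 1))))
      (rotP P (perP P (3 * τ - 1)) 0) with h | h
  · exact ⟨0, hp, h.symm ▸ rfl⟩
  · simp only [List.mem_map, List.mem_range] at h
    obtain ⟨δ, hδ, he⟩ := h
    exact ⟨δ, hδ, he.symm ▸ rfl⟩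

lemma rootP_length [LinearOrder α] (τ : ℕ) (hτ : 1 ≤ τ) (P : ℕ → α) :
    (rootP τ P).length = perP P (3 * τ - 1) := by
  obtain ⟨δ, _, he⟩ := rootP_eq_rot τ P (perP_spec τ hτ P).1
  rw [← he, rotP_length]

lemma head_spec [LinearOrder α] (τ : ℕ) (P : ℕ → α) (hp : 0 < perP P (3 * τ - 1)) :
    rotP P (perP P (3 * τ - 1)) (headP τ P) = rootP τ P ∧
      headP τ P < perP P (3 * τ - 1) := by
  obtain ⟨δ, hδ, he⟩ := rootP_eq_rot τ P hp
  have hne : ({s | rotP P (perP P (3 * τ - 1)) s = rootP τ P} : Set ℕ).Nonempty := ⟨δ, he⟩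
  exact ⟨Nat.sInf_mem hne, lt_of_le_of_lt (Nat.sInf_le he) hδ⟩

lemma runend_spec (τ : ℕ) (hτ : 1 ≤ τ) (P : ℕ → α) (m : ℕ) (h : IsPeriodicPat τ P m) :
    ∃ S, runendP τ P m = 1 + perP P (3 * τ - 1) + S ∧
      perP P (3 * τ - 1) + S ≤ m ∧
      (∀ t < S, P (1 + t) = P (1 + perP P (3 * τ - 1) + t)) ∧
      3 * τ - 1 ≤ perP P (3 * τ - 1) + S ∧
      (perP P (3 * τ - 1) + S + 1 ≤ m →
        P (1 + S) ≠ P (1 + perP P (3 * τ - 1) + S)) := by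
  obtain ⟨hm, hq⟩ := h
  obtain ⟨hppos, hper⟩ := perP_spec τ hτ P
  set p := perP P (3 * τ - 1) with hpdef
  set A : Set ℕ := {ℓ | p + ℓ ≤ m ∧ ∀ t < ℓ, P (1 + t) = P (1 + p + t)} with hAdef
  have hbdd : BddAbove A := ⟨m, fun ℓ hℓ => by have := hℓ.1; omega⟩
  have hmem0 : (3 * τ - 1 - p) ∈ A := by
    constructor
    · omega
    · intro t ht
      have := hper t (by omega)
      rw [show 1 + p + t = 1 + t + p by omega]
      exact this
  have hne : A.Nonempty := ⟨_, hmem0⟩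
  have hSmem := Nat.sSup_mem hne hbdd
  have hSlb := le_csSup hbdd hmem0
  refine ⟨sSup A, rfl, hSmem.1, hSmem.2, by omega, ?_⟩
  intro hle heq
  have : sSup A + 1 ∈ A := by
    constructor
    · omega
    · intro t ht
      rcases Nat.lt_or_ge t (sSup A) with h' | h'
      · exact hSmem.2 t h'
      · have : t = sSup A := by omega
        subst this
        exact heq
  have := le_csSup hbdd this
  omega

end LZHelper

namespace LZHelper

open LZ

lemma master {α : Type*} [LinearOrder α] (τ : ℕ) (hτ : 1 ≤ τ)
    (P₁ P₂ : ℕ → α) (m₁ m₂ : ℕ)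
    (h₁ : IsPeriodicPat τ P₁ m₁) (h₂ : IsPeriodicPat τ P₂ m₂)
    (hroot : rootP τ P₁ = rootP τ P₂) (hhead : headP τ P₁ = headP τ P₂) :
    (runendP τ P₁ m₁ - 1 ≤ m₁) ∧
    (∀ u, u < runendP τ P₁ m₁ - 1 → u < runendP τ P₂ m₂ - 1 → P₁ (1 + u) = P₂ (1 + u)) ∧
    (runendP τ P₁ m₁ - 1 < runendP τ P₂ m₂ - 1 → runendP τ P₁ m₁ - 1 < m₁ →
      P₁ (1 + (runendP τ P₁ m₁ - 1)) ≠ P₂ (1 + (runendP τ P₁ m₁ - 1)) ∧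
      (¬ typePosP τ P₁ m₁ →
        P₁ (1 + (runendP τ P₁ m₁ - 1)) < P₂ (1 + (runendP τ P₁ m₁ - 1)))) ∧
    (typePosP τ P₁ m₁ → runendP τ P₁ m₁ - 1 < m₁) ∧
    (runendP τ P₁ m₁ - 1 = runendP τ P₂ m₂ - 1 → runendP τ P₂ m₂ - 1 < m₂ →
      typePosP τ P₁ m₁ → ¬ typePosP τ P₂ m₂ →
      P₂ (1 + (runendP τ P₁ m₁ - 1)) < P₁ (1 + (runendP τ P₁ m₁ - 1))) := by
  obtain ⟨hm₁, hq₁⟩ := h₁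
  obtain ⟨hm₂, hq₂⟩ := h₂
  obtain ⟨hp₁pos, hper₁⟩ := perP_spec τ hτ P₁
  obtain ⟨hp₂pos, hper₂⟩ := perP_spec τ hτ P₂
  obtain ⟨S₁, hre₁, hSm₁, hSper₁, hSlb₁, hSmax₁⟩ := runend_spec τ hτ P₁ m₁ ⟨hm₁, hq₁⟩
  obtain ⟨S₂, hre₂, hSm₂, hSper₂, hSlb₂, hSmax₂⟩ := runend_spec τ hτ P₂ m₂ ⟨hm₂, hq₂⟩
  obtain ⟨hrot₁, hs₁⟩ := head_spec τ P₁ hp₁pos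
  obtain ⟨hrot₂, hs₂⟩ := head_spec τ P₂ hp₂pos
  have hp : perP P₂ (3 * τ - 1) = perP P₁ (3 * τ - 1) := by
    rw [← rootP_length τ hτ P₂, ← rootP_length τ hτ P₁, hroot]
  set p := perP P₁ (3 * τ - 1) with hpdef
  set s := headP τ P₁ with hsdef
  rw [hp] at hp₂pos hper₂ hre₂ hSm₂ hSper₂ hSlb₂ hSmax₂ hrot₂ hs₂
  rw [← hhead] at hrot₂ hs₂
  -- window agreement
  have hwin : ∀ t < p, P₁ (1 + s + t) = P₂ (1 + s + t) := by
    intro t ht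
    have heq : rotP P₁ p s = rotP P₂ p s := hrot₁.trans (hroot.trans hrot₂.symm)
    have := congrArg (fun l => l[t]?) heq
    simpa [rotP, ht] using this
  have ht₁ : runendP τ P₁ m₁ - 1 = p + S₁ := by omega
  have ht₂ : runendP τ P₂ m₂ - 1 = p + S₂ := by omega
  rw [ht₁, ht₂]
  have hbig₁ : 8 * p - 1 ≤ S₁ := by omega
  have hbig₂ : 8 * p - 1 ≤ S₂ := by omega
  -- agreement on common run prefix
  have agree : ∀ u, u < p + S₁ → u < p + S₂ → P₁ (1 + u) = P₂ (1 + u) := by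
    intro u
    induction u using Nat.strong_induction_on with
    | _ u ih =>
      intro hu1 hu2
      rcases Nat.lt_or_ge u (s + p) with h | h
      · rcases Nat.lt_or_ge u s with h' | h'
        · have e1 : P₁ (1 + u) = P₁ (1 + p + u) := hSper₁ u (by omega)
          have e2 : P₂ (1 + u) = P₂ (1 + p + u) := hSper₂ u (by omega)
          have e3 := hwin (u + p - s) (by omega)
          rw [show 1 + s + (u + p - s) = 1 + p + u by omega] at e3
          rw [e1, e2, e3]
        · have e3 := hwin (u - s) (by omega)
          rw [show 1 + s + (u - s) = 1 + u by omega] at e3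
          exact e3
      · have e1 : P₁ (1 + (u - p)) = P₁ (1 + p + (u - p)) := hSper₁ (u - p) (by omega)
        have e2 : P₂ (1 + (u - p)) = P₂ (1 + p + (u - p)) := hSper₂ (u - p) (by omega)
        rw [show 1 + p + (u - p) = 1 + u by omega] at e1 e2
        rw [← e1, ← e2]
        exact ih (u - p) (by omega) (by omega) (by omega)
  refine ⟨by omega, agree, ?_, ?_, ?_⟩
  · -- mismatch clause
    intro hlt hm
    have hS12 : S₁ < S₂ := by omega
    have e2 : P₂ (1 + S₁) = P₂ (1 + p + S₁) := hSper₂ S₁ hS12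
    have eag : P₁ (1 + S₁) = P₂ (1 + S₁) := agree S₁ (by omega) (by omega)
    have hmax : P₁ (1 + S₁) ≠ P₁ (1 + p + S₁) := hSmax₁ (by omega)
    have hne : P₁ (1 + (p + S₁)) ≠ P₂ (1 + (p + S₁)) := by
      rw [show 1 + (p + S₁) = 1 + p + S₁ by omega]
      rw [← e2, ← eag]
      exact fun hh => hmax hh.symm
    refine ⟨hne, ?_⟩
    intro hT
    rw [typePosP] at hT
    push_neg at hT
    have hT' := hT (by omega)
    rw [hre₁, show 1 + p + S₁ - p = 1 + S₁ by omega] at hT'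
    -- hT' : ¬ (P₁ (1 + S₁) < P₁ (1 + p + S₁))  (as ≤ after push_neg)
    rw [show 1 + (p + S₁) = 1 + p + S₁ by omega]
    have : P₁ (1 + p + S₁) < P₁ (1 + S₁) := lt_of_le_of_ne hT' (fun hh => hmax hh.symm)
    calc P₁ (1 + p + S₁) < P₁ (1 + S₁) := this
      _ = P₂ (1 + S₁) := eag
      _ = P₂ (1 + p + S₁) := e2
  · -- type⁺ implies runend within bounds
    intro hT
    exact by have := hT.1; omega
  · -- equal run length, type₁ = +1, type₂ = -1
    intro hSe hm2 hT₁ hT₂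
    have hSS : S₁ = S₂ := by omega
    subst hSS
    have hlt₁ := hT₁.2
    rw [hre₁, show 1 + p + S₁ - p = 1 + S₁ by omega] at hlt₁
    rw [typePosP] at hT₂
    push_neg at hT₂
    have hT₂' := hT₂ (by omega)
    rw [hre₂, hp, show 1 + p + S₁ - p = 1 + S₁ by omega] at hT₂'
    have hmax₂ : P₂ (1 + S₁) ≠ P₂ (1 + p + S₁) := hSmax₂ (by omega)
    have eag : P₁ (1 + S₁) = P₂ (1 + S₁) := agree S₁ (by omega) (by omega)
    rw [show 1 + (p + S₁) = 1 + p + S₁ by omega]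
    calc P₂ (1 + p + S₁) < P₂ (1 + S₁) := lt_of_le_of_ne hT₂' (fun hh => hmax₂ hh.symm)
      _ = P₁ (1 + S₁) := eag.symm
      _ < P₁ (1 + p + S₁) := hlt₁

end LZHelper

namespace LZHelper
open LZ

lemma lex_step {α : Type*} [LinearOrder α] (τ : ℕ) (hτ : 1 ≤ τ)
    (P₁ P₂ : ℕ → α) (m₁ m₂ : ℕ)
    (h₁ : IsPeriodicPat τ P₁ m₁) (h₂ : IsPeriodicPat τ P₂ m₂)
    (hroot : rootP τ P₁ = rootP τ P₂) (hhead : headP τ P₁ = headP τ P₂)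
    (hn₁ : ¬ typePosP τ P₁ m₁)
    (hlt : runendP τ P₁ m₁ - 1 < runendP τ P₂ m₂ - 1) :
    List.Lex (· < ·) (toListP P₁ m₁) (toListP P₂ m₂) := by
  obtain ⟨hb₁, agree, hc, -, -⟩ := master τ hτ P₁ P₂ m₁ m₂ h₁ h₂ hroot hhead
  obtain ⟨hb₂, -, -, -, -⟩ := master τ hτ P₂ P₁ m₂ m₁ h₂ h₁ hroot.symm hhead.symm
  set t₁ := runendP τ P₁ m₁ - 1 with ht₁
  set t₂ := runendP τ P₂ m₂ - 1 with ht₂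
  rcases eq_or_lt_of_le hb₁ with he | hm
  · apply lex_of_agree m₁
    · intro i hi
      rw [toListP_getElem? _ hi, toListP_getElem? _ (show i < m₂ by omega)]
      exact congrArg some (agree i (by omega) (by omega))
    · left
      rw [toListP_length, toListP_length]
      exact ⟨rfl, by omega⟩
  · obtain ⟨-, hsign⟩ := hc hlt hm
    have hx := hsign hn₁
    apply lex_of_agree t₁
    · intro i hi
      rw [toListP_getElem? _ (by omega), toListP_getElem? _ (by omega)]
      exact congrArg some (agree i (by omega) (by omega))
    · right
      exact ⟨_, _, toListP_getElem? _ (by omega), toListP_getElem? _ (by omega), hx⟩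

end LZHelper

open LZHelper

open LZ in
/-- Let `P₁, P₂` be `τ`-periodic patterns with the same root and the
same head, and let `t₁ = runend(P₁) - 1`, `t₂ = runend(P₂) - 1`. Then
`lcp(P₁,P₂) ≥ min(t₁,t₂)`; if the types differ or `t₁ ≠ t₂`, then `P₁ ≠ P₂` and
`lcp(P₁,P₂) = min(t₁,t₂)`; and if both types are `-1` and `t₁ ≠ t₂`, then
`t₁ < t₂ ↔ P₁ ≺ P₂`. -/
theorem periodic_patterns_lex {α : Type*} [LinearOrder α] (τ : ℕ) (hτ : 1 ≤ τ)
    (P₁ P₂ : ℕ → α) (m₁ m₂ : ℕ)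
    (h₁ : IsPeriodicPat τ P₁ m₁) (h₂ : IsPeriodicPat τ P₂ m₂)
    (hroot : rootP τ P₁ = rootP τ P₂) (hhead : headP τ P₁ = headP τ P₂) :
    min (runendP τ P₁ m₁ - 1) (runendP τ P₂ m₂ - 1) ≤ lcpP P₁ P₂ m₁ m₂ ∧
    ((¬ (typePosP τ P₁ m₁ ↔ typePosP τ P₂ m₂) ∨
        runendP τ P₁ m₁ - 1 ≠ runendP τ P₂ m₂ - 1) →
      toListP P₁ m₁ ≠ toListP P₂ m₂ ∧
      lcpP P₁ P₂ m₁ m₂ = min (runendP τ P₁ m₁ - 1) (runendP τ P₂ m₂ - 1)) ∧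
    ((¬ typePosP τ P₁ m₁ ∧ ¬ typePosP τ P₂ m₂ ∧
        runendP τ P₁ m₁ - 1 ≠ runendP τ P₂ m₂ - 1) →
      (runendP τ P₁ m₁ - 1 < runendP τ P₂ m₂ - 1 ↔
        List.Lex (· < ·) (toListP P₁ m₁) (toListP P₂ m₂))) := by
  obtain ⟨hb₁, agree, hc12, hty₁, hd12⟩ := master τ hτ P₁ P₂ m₁ m₂ h₁ h₂ hroot hhead
  obtain ⟨hb₂, -, hc21, hty₂, hd21⟩ := master τ hτ P₂ P₁ m₂ m₁ h₂ h₁ hroot.symm hhead.symm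
  set t₁ := runendP τ P₁ m₁ - 1 with ht₁
  set t₂ := runendP τ P₂ m₂ - 1 with ht₂
  have hmin_le : min t₁ t₂ ≤ lcpP P₁ P₂ m₁ m₂ :=
    lcpP_ge P₁ P₂ (fun u hu => agree u (by omega) (by omega)) (by omega) (by omega)
  refine ⟨hmin_le, ?_, ?_⟩
  · intro hcase
    rcases Nat.lt_trichotomy t₁ t₂ with hlt | heq | hgt
    · rcases eq_or_lt_of_le hb₁ with he | hm
      · refine ⟨toListP_ne_of_len _ _ (by omega), ?_⟩
        have := lcpP_le P₁ P₂ (m₁ := m₁) (m₂ := m₂) (k := t₁) (Or.inl he)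
        omega
      · obtain ⟨hne, -⟩ := hc12 hlt hm
        refine ⟨toListP_ne_of_entry _ _ hm (by omega) hne, ?_⟩
        have := lcpP_le P₁ P₂ (m₁ := m₁) (m₂ := m₂) (Or.inr (Or.inr hne))
        omega
    · have hTd : (typePosP τ P₁ m₁ ∧ ¬ typePosP τ P₂ m₂) ∨
          (typePosP τ P₂ m₂ ∧ ¬ typePosP τ P₁ m₁) := by
        rcases hcase with hcase | hcase
        · by_cases hA : typePosP τ P₁ m₁
          · exact Or.inl ⟨hA, fun hB => hcase ⟨fun _ => hB, fun _ => hA⟩⟩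
          · by_cases hB : typePosP τ P₂ m₂
            · exact Or.inr ⟨hB, hA⟩
            · exact absurd ⟨fun h => absurd h hA, fun h => absurd h hB⟩ hcase
        · exact absurd heq hcase
      rcases hTd with ⟨hA, hB⟩ | ⟨hA, hB⟩
      · have hm1 : t₁ < m₁ := hty₁ hA
        rcases eq_or_lt_of_le hb₂ with he2 | hm2
        · refine ⟨toListP_ne_of_len _ _ (by omega), ?_⟩
          have := lcpP_le P₁ P₂ (m₁ := m₁) (m₂ := m₂) (k := t₂) (Or.inr (Or.inl he2))
          omega
        · have hx := hd12 heq hm2 hA hB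
          refine ⟨toListP_ne_of_entry _ _ hm1 (by omega) hx.ne', ?_⟩
          have := lcpP_le P₁ P₂ (m₁ := m₁) (m₂ := m₂) (Or.inr (Or.inr hx.ne'))
          omega
      · have hm2 : t₂ < m₂ := hty₂ hA
        rcases eq_or_lt_of_le hb₁ with he | hm1
        · refine ⟨toListP_ne_of_len _ _ (by omega), ?_⟩
          have := lcpP_le P₁ P₂ (m₁ := m₁) (m₂ := m₂) (k := t₁) (Or.inl he)
          omega
        · have hx := hd21 heq.symm hm1 hA hB
          refine ⟨toListP_ne_of_entry _ _ (by omega) hm2 hx.ne, ?_⟩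
          have := lcpP_le P₁ P₂ (m₁ := m₁) (m₂ := m₂) (Or.inr (Or.inr hx.ne))
          omega
    · rcases eq_or_lt_of_le hb₂ with he | hm
      · refine ⟨toListP_ne_of_len _ _ (by omega), ?_⟩
        have := lcpP_le P₁ P₂ (m₁ := m₁) (m₂ := m₂) (k := t₂) (Or.inr (Or.inl he))
        omega
      · obtain ⟨hne, -⟩ := hc21 hgt hm
        refine ⟨toListP_ne_of_entry _ _ (by omega) hm (Ne.symm hne), ?_⟩
        have := lcpP_le P₁ P₂ (m₁ := m₁) (m₂ := m₂) (Or.inr (Or.inr (Ne.symm hne)))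
        omega
  · rintro ⟨hn₁, hn₂, hne⟩
    constructor
    · intro hlt
      exact lex_step τ hτ P₁ P₂ m₁ m₂ h₁ h₂ hroot hhead hn₁ hlt
    · intro hlex
      by_contra hcon
      have hgt : t₂ < t₁ := by omega
      exact asymm (lex_step τ hτ P₂ P₁ m₂ m₁ h₂ h₁ hroot.symm hhead.symm hn₂ hgt) hlex
end

section
/- Let P be a τ-periodic pattern and P' any nonempty pattern. Then lcp(P, P') ≥ 3τ - 1 holds if and only if P' is τ-periodic with root(P') = root(P) and head(P') = head(P). Moreover, if runend(P) ≤ |P| and lcp(P, P') ≥ runend(P), then runend(P') = runend(P), tail(P') = tail(P), runendfull(P') = runendfull(P), exp(P') = exp(P), and type(P') = type(P). -/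
theorem List.foldr_min_mem {β : Type*} [LinearOrder β] (b : β) (l : List β) :
    l.foldr min b ∈ b :: l := by
  induction l with
  | nil => exact List.mem_singleton_self b
  | cons a l ih =>
    rcases min_choice a (l.foldr min b) with h | h <;> simp only [List.foldr_cons, h]
    · simp
    · rcases List.mem_cons.mp ih with h' | h' <;> simp [h']

theorem IsLowerSet.le_sSup_iff_mem {S : Set ℕ} (hS : IsLowerSet S) (hne : S.Nonempty)
    (hbdd : BddAbove S) {k : ℕ} : k ≤ sSup S ↔ k ∈ S :=
  ⟨fun hk => hS hk (Nat.sSup_mem hne hbdd), fun hk => le_csSup hbdd hk⟩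

theorem eq_of_periodic_of_eq_on_window {β : Type*} {f g : ℕ → β} {p h N : ℕ}
    (hf : ∀ t, t + p < N → f t = f (t + p)) (hg : ∀ t, t + p < N → g t = g (t + p))
    (hh : h < p) (hN : h + p ≤ N) (hw : ∀ t < p, f (h + t) = g (h + t)) :
    ∀ t < N, f t = g t := by
  intro t ht
  induction t using Nat.strong_induction_on with
  | _ t ih =>
    by_cases hth : t < h
    · rw [hf t (by omega), hg t (by omega), show t + p = h + (t + p - h) by omega]
      exact hw _ (by omega)
    by_cases htp : t < h + p
    · rw [show t = h + (t - h) by omega]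
      exact hw _ (by omega)
    rw [show t = t - p + p by omega, ← hf _ (by omega), ← hg _ (by omega)]
    exact ih _ (by omega) (by omega)

namespace LZ

variable {α : Type*}

def PrefixEq (P Q : ℕ → α) (ℓ : ℕ) : Prop := ∀ t < ℓ, P (1 + t) = Q (1 + t)

theorem PrefixEq.eq {P Q : ℕ → α} {ℓ k : ℕ} (h : PrefixEq P Q ℓ) (hk₁ : 1 ≤ k) (hk : k ≤ ℓ) :
    P k = Q k := by
  simpa [show 1 + (k - 1) = k by omega] using h (k - 1) (by omega)

theorem PrefixEq.mono {P Q : ℕ → α} {ℓ ℓ' : ℕ} (h : PrefixEq P Q ℓ) (hℓ : ℓ' ≤ ℓ) :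
    PrefixEq P Q ℓ' :=
  fun t ht => h t (by omega)

theorem le_lcpP_iff {P Q : ℕ → α} {m₁ m₂ ℓ : ℕ} :
    ℓ ≤ lcpP P Q m₁ m₂ ↔ ℓ ≤ m₁ ∧ ℓ ≤ m₂ ∧ PrefixEq P Q ℓ := by
  refine IsLowerSet.le_sSup_iff_mem ?_ ⟨0, by simp⟩ ⟨m₁, fun ℓ hℓ => hℓ.1⟩
  rintro ℓ ℓ' hle ⟨h₁, h₂, h⟩
  exact ⟨hle.trans h₁, hle.trans h₂, PrefixEq.mono h hle⟩

theorem perP_pos (P : ℕ → α) (ℓ : ℕ) : 0 < perP P ℓ :=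
  (Nat.sInf_mem (s := {p | 0 < p ∧ ∀ t, t + p < ℓ → P (1 + t) = P (1 + t + p)})
    ⟨ℓ + 1, by simp; omega⟩).1

theorem perP_periodic (P : ℕ → α) (ℓ : ℕ) :
    ∀ t, t + perP P ℓ < ℓ → P (1 + t) = P (1 + t + perP P ℓ) :=
  (Nat.sInf_mem (s := {p | 0 < p ∧ ∀ t, t + p < ℓ → P (1 + t) = P (1 + t + p)})
    ⟨ℓ + 1, by simp; omega⟩).2

theorem perP_congr {P Q : ℕ → α} {ℓ : ℕ} (h : PrefixEq P Q ℓ) : perP Q ℓ = perP P ℓ := by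
  unfold perP
  congr 1
  ext p
  refine and_congr_right fun _ => forall_congr' fun t => imp_congr_right fun ht => ?_
  rw [h.eq (by omega) (by omega), h.eq (k := 1 + t + p) (by omega) (by omega)]

theorem rotP_eq_rotP_iff {P Q : ℕ → α} {p δ : ℕ} :
    rotP P p δ = rotP Q p δ ↔ ∀ t < p, P (1 + δ + t) = Q (1 + δ + t) := by
  simp [rotP, List.map_inj_left]

theorem rotP_congr {P Q : ℕ → α} {ℓ p δ : ℕ} (h : PrefixEq P Q ℓ) (hδ : δ + p ≤ ℓ) :
    rotP Q p δ = rotP P p δ :=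
  rotP_eq_rotP_iff.mpr fun t ht => (h.eq (by omega) (by omega)).symm

/-- The length `lcp(P[1..m], P[1+p..m])` by which the period `p` extends from the start of `P`. -/
noncomputable def runExt (P : ℕ → α) (p m : ℕ) : ℕ :=
  sSup {ℓ | p + ℓ ≤ m ∧ ∀ t < ℓ, P (1 + t) = P (1 + p + t)}

theorem runendP_eq (τ : ℕ) (P : ℕ → α) (m : ℕ) :
    runendP τ P m = 1 + perP P (3 * τ - 1) + runExt P (perP P (3 * τ - 1)) m :=
  rfl

theorem le_runExt_iff {P : ℕ → α} {p m ℓ : ℕ} (hpm : p ≤ m) :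
    ℓ ≤ runExt P p m ↔ p + ℓ ≤ m ∧ ∀ t < ℓ, P (1 + t) = P (1 + p + t) := by
  refine IsLowerSet.le_sSup_iff_mem ?_ ⟨0, by simpa using hpm⟩
    ⟨m, fun ℓ hℓ => by have := hℓ.1; omega⟩
  rintro ℓ ℓ' hle ⟨hℓ, h⟩
  exact ⟨by omega, fun t ht => h t (by omega)⟩

theorem runExt_congr {P Q : ℕ → α} {p m m' : ℕ} (hrun : 1 + p + runExt P p m ≤ m)
    (h : PrefixEq P Q (1 + p + runExt P p m)) (hm' : 1 + p + runExt P p m ≤ m') :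
    runExt Q p m' = runExt P p m := by
  set s := runExt P p m
  have hP : p + s ≤ m ∧ ∀ t < s, P (1 + t) = P (1 + p + t) :=
    (le_runExt_iff (by omega)).mp le_rfl
  apply le_antisymm
  · by_contra! hlt
    obtain ⟨-, hQ⟩ := (le_runExt_iff (by omega)).mp hlt
    have hmem : p + (s + 1) ≤ m ∧ ∀ t < s + 1, P (1 + t) = P (1 + p + t) := by
      refine ⟨by omega, fun t ht => ?_⟩
      rw [h.eq (by omega) (by omega), h.eq (k := 1 + p + t) (by omega) (by omega)]
      exact hQ t (by omega)
    have := (le_runExt_iff (by omega)).mpr hmem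
    omega
  · refine (le_runExt_iff (by omega)).mpr ⟨by omega, fun t ht => ?_⟩
    rw [← h.eq (by omega) (by omega), ← h.eq (k := 1 + p + t) (by omega) (by omega)]
    exact hP.2 t ht

theorem three_mul_le_runendP {τ m : ℕ} {P : ℕ → α} (hP : IsPeriodicPat τ P m) :
    3 * τ ≤ runendP τ P m := by
  obtain ⟨hm, hp⟩ := hP
  have hpos := perP_pos P (3 * τ - 1)
  have hrun : 3 * τ - 1 - perP P (3 * τ - 1) ≤ runExt P (perP P (3 * τ - 1)) m := by
    refine (le_runExt_iff (by omega)).mpr ⟨by omega, fun t ht => ?_⟩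
    rw [add_right_comm]
    exact perP_periodic P _ t (by omega)
  rw [runendP_eq]
  omega

theorem runendP_congr {τ m m' : ℕ} {P Q : ℕ → α} (hrun : runendP τ P m ≤ m)
    (h : PrefixEq P Q (runendP τ P m)) (hm' : runendP τ P m ≤ m')
    (hper : perP Q (3 * τ - 1) = perP P (3 * τ - 1)) :
    runendP τ Q m' = runendP τ P m := by
  rw [runendP_eq τ Q, hper, runExt_congr hrun h hm', runendP_eq]

section LinearOrder

variable [LinearOrder α]

theorem typePosP_congr {τ m m' : ℕ} {P Q : ℕ → α} (hrun : runendP τ P m ≤ m)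
    (h : PrefixEq P Q (runendP τ P m)) (hm' : runendP τ P m ≤ m')
    (hper : perP Q (3 * τ - 1) = perP P (3 * τ - 1))
    (hre : runendP τ Q m' = runendP τ P m) :
    typePosP τ Q m' ↔ typePosP τ P m := by
  have := runendP_eq τ P m
  unfold typePosP
  rw [hre, hper, ← h.eq (by omega) le_rfl, ← h.eq (k := runendP τ P m - perP P _) (by omega)
    (by omega)]
  simp only [hrun, hm', true_and]

theorem exists_rotP_eq_rootP (τ : ℕ) (P : ℕ → α) :
    ∃ δ < perP P (3 * τ - 1), rotP P (perP P (3 * τ - 1)) δ = rootP τ P := by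
  rcases List.mem_cons.mp (List.foldr_min_mem (rotP P (perP P (3 * τ - 1)) 0)
      ((List.range (perP P (3 * τ - 1))).map (rotP P (perP P (3 * τ - 1))))) with h | h
  · exact ⟨0, perP_pos P _, h.symm⟩
  · simpa [rootP, eq_comm] using h

theorem length_rootP (τ : ℕ) (P : ℕ → α) : (rootP τ P).length = perP P (3 * τ - 1) := by
  obtain ⟨δ, -, h⟩ := exists_rotP_eq_rootP τ P
  simp [← h, rotP]

theorem rotP_headP (τ : ℕ) (P : ℕ → α) :
    rotP P (perP P (3 * τ - 1)) (headP τ P) = rootP τ P := by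
  obtain ⟨δ, -, h⟩ := exists_rotP_eq_rootP τ P
  exact Nat.sInf_mem (s := {s | rotP P _ s = rootP τ P}) ⟨δ, h⟩

theorem headP_lt_perP (τ : ℕ) (P : ℕ → α) : headP τ P < perP P (3 * τ - 1) := by
  obtain ⟨δ, hδ, h⟩ := exists_rotP_eq_rootP τ P
  exact (Nat.sInf_le h).trans_lt hδ

section Congr

variable {τ : ℕ} {P Q : ℕ → α}

theorem rootP_congr (hp : 3 * perP P (3 * τ - 1) ≤ τ) (h : PrefixEq P Q (3 * τ - 1)) :
    rootP τ Q = rootP τ P := by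
  have hrot : ∀ δ < perP P (3 * τ - 1), rotP Q (perP P (3 * τ - 1)) δ = rotP P _ δ :=
    fun δ hδ => rotP_congr h (by omega)
  simp only [rootP, perP_congr h]
  rw [List.map_congr_left fun δ hδ => hrot δ (List.mem_range.mp hδ), hrot 0 (perP_pos P _)]

theorem headP_congr (hp : 3 * perP P (3 * τ - 1) ≤ τ) (h : PrefixEq P Q (3 * τ - 1)) :
    headP τ Q = headP τ P := by
  have hlt := headP_lt_perP τ P
  have hlt' := headP_lt_perP τ Q
  rw [perP_congr h] at hlt'
  apply le_antisymm <;> apply Nat.sInf_le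
  · show rotP Q _ _ = _
    rw [perP_congr h, rootP_congr hp h, rotP_congr h (by omega), rotP_headP]
  · show rotP P _ _ = _
    rw [← rootP_congr hp h, ← rotP_congr h (by omega), ← perP_congr h, rotP_headP]

theorem isPeriodicPat_of_prefixEq {m' : ℕ} (hp : 3 * perP P (3 * τ - 1) ≤ τ)
    (h : PrefixEq P Q (3 * τ - 1)) (hm' : 3 * τ - 1 ≤ m') :
    IsPeriodicPat τ Q m' ∧ rootP τ Q = rootP τ P ∧ headP τ Q = headP τ P :=
  ⟨⟨hm', by rwa [perP_congr h]⟩, rootP_congr hp h, headP_congr hp h⟩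

theorem prefixEq_of_rootP_eq (hp : 3 * perP P (3 * τ - 1) ≤ τ)
    (hroot : rootP τ Q = rootP τ P) (hhead : headP τ Q = headP τ P) :
    PrefixEq P Q (3 * τ - 1) := by
  have hper : perP Q (3 * τ - 1) = perP P (3 * τ - 1) := by
    rw [← length_rootP τ Q, hroot, length_rootP]
  have hlt := headP_lt_perP τ P
  have hwindow :
      rotP P (perP P (3 * τ - 1)) (headP τ P) = rotP Q (perP P (3 * τ - 1)) (headP τ P) := by
    rw [rotP_headP, ← hroot, ← hhead, ← hper, rotP_headP]
  have hperiodic : ∀ R : ℕ → α, perP R (3 * τ - 1) = perP P (3 * τ - 1) →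
      ∀ t, t + perP P (3 * τ - 1) < 3 * τ - 1 →
        R (1 + t) = R (1 + (t + perP P (3 * τ - 1))) := by
    intro R hR t ht
    rw [← hR, ← add_assoc]
    exact perP_periodic R _ t (by omega)
  refine eq_of_periodic_of_eq_on_window (hperiodic P rfl) (hperiodic Q hper) hlt (by omega)
    fun t ht => ?_
  simpa only [add_assoc] using rotP_eq_rotP_iff.mp hwindow t ht

end Congr

end LinearOrder

end LZ

open LZ in
theorem periodic_pattern_lcp_general {α : Type*} [LinearOrder α] (τ : ℕ)
    (P P' : ℕ → α) (m m' : ℕ)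
    (hP : IsPeriodicPat τ P m) :
    (3 * τ - 1 ≤ lcpP P P' m m' ↔
      (IsPeriodicPat τ P' m' ∧ rootP τ P' = rootP τ P ∧ headP τ P' = headP τ P)) ∧
    (runendP τ P m ≤ m → runendP τ P m ≤ lcpP P P' m m' →
      (runendP τ P' m' = runendP τ P m ∧
       tailP τ P' m' = tailP τ P m ∧
       runendfullP τ P' m' = runendfullP τ P m ∧
       expP τ P' m' = expP τ P m ∧
       (typePosP τ P' m' ↔ typePosP τ P m))) := by
  refine ⟨⟨fun hlcp => ?_, fun ⟨hP', hroot, hhead⟩ => ?_⟩, fun hrun hlcp => ?_⟩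
  · obtain ⟨-, hm', h⟩ := le_lcpP_iff.mp hlcp
    exact isPeriodicPat_of_prefixEq hP.2 h hm'
  · exact le_lcpP_iff.mpr ⟨hP.1, hP'.1, prefixEq_of_rootP_eq hP.2 hroot hhead⟩
  · obtain ⟨-, hm', h⟩ := le_lcpP_iff.mp hlcp
    have hprefix : PrefixEq P P' (3 * τ - 1) :=
      h.mono (by have := three_mul_le_runendP hP; omega)
    have hper := perP_congr hprefix
    have hre := runendP_congr hrun h hm' hper
    simp only [tailP, expP, runendfullP, hre, hper, headP_congr hP.2 hprefix, true_and]
    exact typePosP_congr hrun h hm' hper hre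

open LZ in
/-- Let `P` be a `τ`-periodic pattern and `P'` any nonempty pattern.
Then `lcp(P,P') ≥ 3τ - 1` iff `P'` is `τ`-periodic with `root(P') = root(P)` and
`head(P') = head(P)`. Moreover, if `runend(P) ≤ |P|` and `lcp(P,P') ≥ runend(P)`,
then `runend(P') = runend(P)`, `tail(P') = tail(P)`, `runendfull(P') = runendfull(P)`,
`exp(P') = exp(P)` and `type(P') = type(P)`. -/
theorem periodic_pattern_lcp {α : Type*} [LinearOrder α] (τ : ℕ) (hτ : 1 ≤ τ)
    (P P' : ℕ → α) (m m' : ℕ) (hm' : 1 ≤ m')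
    (hP : IsPeriodicPat τ P m) :
    (3 * τ - 1 ≤ lcpP P P' m m' ↔
      (IsPeriodicPat τ P' m' ∧ rootP τ P' = rootP τ P ∧ headP τ P' = headP τ P)) ∧
    (runendP τ P m ≤ m → runendP τ P m ≤ lcpP P P' m m' →
      (runendP τ P' m' = runendP τ P m ∧
       tailP τ P' m' = tailP τ P m ∧
       runendfullP τ P' m' = runendfullP τ P m ∧
       expP τ P' m' = expP τ P m ∧
       (typePosP τ P' m' ↔ typePosP τ P m))) :=
  periodic_pattern_lcp_general τ P P' m m' hP
end

section
/- Let τ ∈ [1..⌊n/2⌋]. If j ∈ RMin⁻(τ,T) and j - 1 ∈ R(τ,T), then j - 1 ∈ RMin⁻(τ,T). That is, within a maximal block of run positions, the property of being a leftmost-minimal occurrence position of the run suffix propagates leftward. -/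
open LZ

namespace LZP

variable {α : Type*}

lemma one_per (f : ℕ → α) (L p : ℕ)
    (h : ∀ t, t + p < L → f t = f (t + p)) :
    ∀ k t, t + k * p < L → f t = f (t + k * p) := by
  intro k
  induction k with
  | zero => intro t _; simp
  | succ k ih =>
    intro t ht
    have hkp : (k + 1) * p = k * p + p := by ring
    have h1 : t + p < L := by omega
    have h2 : (t + p) + k * p < L := by omega
    rw [h t h1, ih (t + p) h2]
    congr 1; omega

lemma one_per_mod (f : ℕ → α) (L p : ℕ) (hp : 0 < p)
    (h : ∀ t, t + p < L → f t = f (t + p)) :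
    ∀ t s, t < L → s < L → t % p = s % p → f t = f s := by
  have key : ∀ t s, t ≤ s → s < L → t % p = s % p → f t = f s := by
    intro t s hts hs hmod
    obtain ⟨k, hk⟩ := (Nat.modEq_iff_dvd' hts).mp hmod
    have hs' : s = t + k * p := by rw [Nat.mul_comm]; omega
    rw [hs']
    exact one_per f L p h k t (by omega)
  intro t s ht hs hm
  rcases le_total t s with h' | h'
  · exact key t s h' hs hm
  · exact (key s t h' ht hm.symm).symm

lemma fw_aux : ∀ (N p q L : ℕ), p + q ≤ N → 0 < p → 0 < q → ∀ f : ℕ → α, p + q ≤ L →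
    (∀ t, t + p < L → f t = f (t + p)) →
    (∀ t, t + q < L → f t = f (t + q)) →
    ∀ t s, t < L → s < L → t % Nat.gcd p q = s % Nat.gcd p q → f t = f s := by
  intro N
  induction N with
  | zero => intro p q L h hp hq; omega
  | succ N IHN =>
    intro p q L hN hp hq f hL h1 h2 t s ht hs hm
    rcases lt_trichotomy p q with hpq | hpq | hpq
    · -- p < q : recurse with (p, q - p) on length L - p
      have hgd : Nat.gcd p (q - p) = Nat.gcd p q := Nat.gcd_sub_self_right (le_of_lt hpq)
      set g := Nat.gcd p q with hg
      have hgdvdp : g ∣ p := Nat.gcd_dvd_left p q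
      have hgpos : 0 < g := Nat.gcd_pos_of_pos_left q hp
      have h1' : ∀ t, t + p < L - p → f t = f (t + p) := fun t htp => h1 t (by omega)
      have h2' : ∀ t, t + (q - p) < L - p → f t = f (t + (q - p)) := by
        intro t htp
        have e1 : f t = f (t + q) := h2 t (by omega)
        have e2 : f (t + (q - p)) = f (t + (q - p) + p) := h1 _ (by omega)
        have e3 : t + (q - p) + p = t + q := by omega
        rw [e1, e2, e3]
      have C : ∀ t s, t < L - p → s < L - p → t % g = s % g → f t = f s := by
        intro t s ht' hs' hm'
        refine IHN p (q - p) (L - p) (by omega) hp (by omega) f (by omega) h1' h2' t s ht' hs' ?_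
        rw [hgd]; exact hm'
      have red : ∀ u, u < L → ∃ u', u' < L - p ∧ u' % g = u % g ∧ f u' = f u := by
        intro u hu
        by_cases hu' : u < L - p
        · exact ⟨u, hu', rfl, rfl⟩
        · have hup : p ≤ u := by omega
          refine ⟨u - p, by omega, ?_, ?_⟩
          · obtain ⟨c, hc⟩ := hgdvdp
            have : u = (u - p) + g * c := by omega
            conv_rhs => rw [this, Nat.add_mul_mod_self_left]
          · have := h1 (u - p) (by omega)
            rw [this]; congr 1; omega
      obtain ⟨t', ht1, ht2, ht3⟩ := red t ht
      obtain ⟨s', hs1, hs2, hs3⟩ := red s hs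
      rw [← ht3, ← hs3]
      exact C t' s' ht1 hs1 (by rw [ht2, hs2]; exact hm)
    · subst hpq
      rw [Nat.gcd_self] at hm
      exact one_per_mod f L p hp h1 t s ht hs hm
    · -- q < p : recurse with (p - q, q) on length L - q
      have hgd : Nat.gcd (p - q) q = Nat.gcd p q := Nat.gcd_sub_self_left (le_of_lt hpq)
      set g := Nat.gcd p q with hg
      have hgdvdq : g ∣ q := Nat.gcd_dvd_right p q
      have hgpos : 0 < g := Nat.gcd_pos_of_pos_left q hp
      have h2' : ∀ t, t + q < L - q → f t = f (t + q) := fun t htp => h2 t (by omega)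
      have h1' : ∀ t, t + (p - q) < L - q → f t = f (t + (p - q)) := by
        intro t htp
        have e1 : f t = f (t + p) := h1 t (by omega)
        have e2 : f (t + (p - q)) = f (t + (p - q) + q) := h2 _ (by omega)
        have e3 : t + (p - q) + q = t + p := by omega
        rw [e1, e2, e3]
      have C : ∀ t s, t < L - q → s < L - q → t % g = s % g → f t = f s := by
        intro t s ht' hs' hm'
        refine IHN (p - q) q (L - q) (by omega) (by omega) hq f (by omega) h1' h2' t s ht' hs' ?_
        rw [hgd]; exact hm'
      have red : ∀ u, u < L → ∃ u', u' < L - q ∧ u' % g = u % g ∧ f u' = f u := by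
        intro u hu
        by_cases hu' : u < L - q
        · exact ⟨u, hu', rfl, rfl⟩
        · have hup : q ≤ u := by omega
          refine ⟨u - q, by omega, ?_, ?_⟩
          · obtain ⟨c, hc⟩ := hgdvdq
            have : u = (u - q) + g * c := by omega
            conv_rhs => rw [this, Nat.add_mul_mod_self_left]
          · have := h2 (u - q) (by omega)
            rw [this]; congr 1; omega
      obtain ⟨t', ht1, ht2, ht3⟩ := red t ht
      obtain ⟨s', hs1, hs2, hs3⟩ := red s hs
      rw [← ht3, ← hs3]
      exact C t' s' ht1 hs1 (by rw [ht2, hs2]; exact hm)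

lemma fineWilf (p q L : ℕ) (f : ℕ → α) (hp : 0 < p) (hq : 0 < q) (hL : p + q ≤ L)
    (h1 : ∀ t, t + p < L → f t = f (t + p))
    (h2 : ∀ t, t + q < L → f t = f (t + q)) :
    ∀ t s, t < L → s < L → t % Nat.gcd p q = s % Nat.gcd p q → f t = f s :=
  fw_aux (p + q) p q L le_rfl hp hq f hL h1 h2

end LZP

namespace LZP

open LZ

lemma sufP_eq (T : ℕ → α) (i k : ℕ) : sufP T i k = T (i + k - 1) := rfl

lemma perP_mem (P : ℕ → α) (ℓ : ℕ) :
    0 < perP P ℓ ∧ ∀ t, t + perP P ℓ < ℓ → P (1 + t) = P (1 + t + perP P ℓ) := by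
  have h : (ℓ + 1) ∈ {p | 0 < p ∧ ∀ t, t + p < ℓ → P (1 + t) = P (1 + t + p)} :=
    ⟨Nat.succ_pos ℓ, fun t ht => absurd ht (by omega)⟩
  exact Nat.sInf_mem ⟨ℓ + 1, h⟩

lemma perP_le (P : ℕ → α) (ℓ p : ℕ) (hp : 0 < p)
    (h : ∀ t, t + p < ℓ → P (1 + t) = P (1 + t + p)) : perP P ℓ ≤ p :=
  Nat.sInf_le ⟨hp, h⟩

lemma perP_T (T : ℕ → α) (i ℓ : ℕ) :
    ∀ t, t + perP (sufP T i) ℓ < ℓ → T (i + t) = T (i + t + perP (sufP T i) ℓ) := by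
  intro t ht
  have h := (perP_mem (sufP T i) ℓ).2 t ht
  simp only [sufP] at h
  convert h using 2 <;> omega

lemma perP_le_T (T : ℕ → α) (i ℓ p : ℕ) (hp : 0 < p)
    (h : ∀ t, t + p < ℓ → T (i + t) = T (i + t + p)) : perP (sufP T i) ℓ ≤ p := by
  apply perP_le _ _ _ hp
  intro t ht
  simp only [sufP]
  convert h t ht using 2 <;> omega

lemma perP_congr_T (T : ℕ → α) (i j ℓ : ℕ) (h : ∀ t < ℓ, T (i + t) = T (j + t)) :
    perP (sufP T i) ℓ = perP (sufP T j) ℓ := by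
  unfold perP
  congr 1
  ext p
  simp only [Set.mem_setOf_eq, sufP]
  constructor <;> rintro ⟨hp, hper⟩ <;> refine ⟨hp, fun t ht => ?_⟩
  · have e1 := h t (by omega)
    have e2 := h (t + p) (by omega)
    have e3 := hper t ht
    have g1 : T (j + (1 + t) - 1) = T (i + (1 + t) - 1) := by
      convert e1.symm using 2 <;> omega
    have g2 : T (i + (1 + t + p) - 1) = T (j + (1 + t + p) - 1) := by
      convert e2 using 2 <;> omega
    rw [g1, e3, g2]
  · have e1 := h t (by omega)
    have e2 := h (t + p) (by omega)
    have e3 := hper t ht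
    have g1 : T (i + (1 + t) - 1) = T (j + (1 + t) - 1) := by
      convert e1 using 2 <;> omega
    have g2 : T (j + (1 + t + p) - 1) = T (i + (1 + t + p) - 1) := by
      convert e2.symm using 2 <;> omega
    rw [g1, e3, g2]

lemma adj_per (τ n : ℕ) (T : ℕ → α) (hτ : 1 ≤ τ) (i : ℕ)
    (hi : i ∈ Rset τ n T) (hi1 : i + 1 ∈ Rset τ n T) :
    perP (sufP T (i+1)) (3*τ-1) = perP (sufP T i) (3*τ-1) := by
  obtain ⟨hi0, hin, hip⟩ := hi
  obtain ⟨hi0', hin', hip'⟩ := hi1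
  set p := perP (sufP T i) (3*τ-1) with hpdef
  set q := perP (sufP T (i+1)) (3*τ-1) with hqdef
  have hp0 : 0 < p := (perP_mem _ _).1
  have hq0 : 0 < q := (perP_mem _ _).1
  have hP := perP_T T i (3*τ-1)
  have hQ := perP_T T (i+1) (3*τ-1)
  set g := Nat.gcd p q with hgdef
  have hg0 : 0 < g := Nat.gcd_pos_of_pos_left q hp0
  have hgp : g ∣ p := Nat.gcd_dvd_left _ _
  have hgq : g ∣ q := Nat.gcd_dvd_right _ _
  have hgp' : g ≤ p := Nat.le_of_dvd hp0 hgp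
  have hgq' : g ≤ q := Nat.le_of_dvd hq0 hgq
  have hFW : ∀ t s, t < 3*τ-2 → s < 3*τ-2 → t % g = s % g →
      T (i+1+t) = T (i+1+s) := by
    have h1 : ∀ t, t + p < 3*τ-2 → T (i+1+t) = T (i+1+(t+p)) := by
      intro t ht
      have h := hP (t+1) (by omega)
      convert h using 2 <;> omega
    have h2 : ∀ t, t + q < 3*τ-2 → T (i+1+t) = T (i+1+(t+q)) := by
      intro t ht
      have h := hQ t (by omega)
      convert h using 2 <;> omega
    intro t s ht hs hm
    exact fineWilf p q (3*τ-2) (fun t => T (i+1+t)) hp0 hq0 (by omega) h1 h2 t s ht hs hm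
  have hq_eq : q = g := by
    have hle : perP (sufP T (i+1)) (3*τ-1) ≤ g := by
      apply perP_le_T T (i+1) _ g hg0
      intro t ht
      by_cases hcase : t + g < 3*τ-2
      · have h := hFW t (t+g) (by omega) hcase (by rw [Nat.add_mod_right])
        convert h using 2 <;> omega
      · have hte : t + g = 3*τ-2 := by omega
        have e1 : T (i+1+(3*τ-2-q)) = T (i+1+(3*τ-2)) := by
          have h := hQ (3*τ-2-q) (by omega)
          convert h using 2 <;> omega
        have e2 : T (i+1+t) = T (i+1+(3*τ-2-q)) := by
          apply hFW t (3*τ-2-q) (by omega) (by omega)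
          have hle2 : 3*τ-2-q ≤ 3*τ-2-g := by omega
          have hdvd : g ∣ (3*τ-2-g) - (3*τ-2-q) := by
            have he : (3*τ-2-g) - (3*τ-2-q) = q - g := by omega
            rw [he]; exact Nat.dvd_sub hgq (dvd_refl g)
          have hmod := ((Nat.modEq_iff_dvd' hle2).mpr hdvd).symm
          rw [show t = 3*τ-2-g by omega]
          exact hmod
        have e3 : T (i+1+(3*τ-2)) = T (i+1+t+g) := by congr 1; omega
        rw [e2, e1, e3]
    omega
  have hp_eq : p = g := by
    have hle : perP (sufP T i) (3*τ-1) ≤ g := by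
      apply perP_le_T T i _ g hg0
      intro t ht
      rcases Nat.eq_zero_or_pos t with rfl | ht0
      · have e0 : T (i+0) = T (i+0+p) := hP 0 (by omega)
        have e1 : T (i+0+p) = T (i+1+(p-1)) := by congr 1; omega
        have e2 : T (i+1+(p-1)) = T (i+1+(g-1)) := by
          apply hFW (p-1) (g-1) (by omega) (by omega)
          have hle2 : g-1 ≤ p-1 := by omega
          have hdvd : g ∣ (p-1) - (g-1) := by
            have he : (p-1)-(g-1) = p - g := by omega
            rw [he]; exact Nat.dvd_sub hgp (dvd_refl g)
          exact ((Nat.modEq_iff_dvd' hle2).mpr hdvd).symm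
        have e3 : T (i+1+(g-1)) = T (i+0+g) := by congr 1; omega
        rw [e0, e1, e2, e3]
      · have h := hFW (t-1) (t-1+g) (by omega) (by omega) (by rw [Nat.add_mod_right])
        convert h using 2 <;> omega
    omega
  rw [hq_eq, hp_eq]

lemma runend_spec (τ n : ℕ) (T : ℕ → α) (hτ : 1 ≤ τ) (i : ℕ) (hi : i ∈ Rset τ n T) :
    ∃ ℓ : ℕ, runendP τ (sufP T i) (n + 1 - i) = 1 + perP (sufP T i) (3*τ-1) + ℓ ∧
      3*τ-1 ≤ perP (sufP T i) (3*τ-1) + ℓ ∧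
      i + perP (sufP T i) (3*τ-1) + ℓ ≤ n + 1 ∧
      (∀ t < ℓ, T (i + t) = T (i + perP (sufP T i) (3*τ-1) + t)) ∧
      (i + perP (sufP T i) (3*τ-1) + ℓ = n + 1 ∨
        T (i + ℓ) ≠ T (i + perP (sufP T i) (3*τ-1) + ℓ)) := by
  obtain ⟨hi0, hin, hip⟩ := hi
  set p := perP (sufP T i) (3*τ-1) with hpdef
  have hp0 : 0 < p := (perP_mem _ _).1
  have hP := perP_T T i (3*τ-1)
  set S := {ℓ | p + ℓ ≤ n + 1 - i ∧ ∀ t < ℓ, sufP T i (1+t) = sufP T i (1+p+t)} with hSdef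
  have hrun : runendP τ (sufP T i) (n + 1 - i) = 1 + p + sSup S := rfl
  have hmemiff : ∀ ℓ, ℓ ∈ S ↔
      (i + p + ℓ ≤ n + 1 ∧ ∀ t < ℓ, T (i + t) = T (i + p + t)) := by
    intro ℓ
    simp only [hSdef, Set.mem_setOf_eq, sufP]
    constructor <;> rintro ⟨h1, h2⟩ <;> refine ⟨by omega, fun t ht => ?_⟩
    · have h := h2 t ht
      convert h using 2 <;> omega
    · have h := h2 t ht
      convert h using 2 <;> omega
  have hS0 : 0 ∈ S := (hmemiff 0).2 ⟨by omega, fun t ht => absurd ht (by omega)⟩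
  have hBdd : BddAbove S := ⟨n + 1, fun ℓ hℓ => by have := (hmemiff ℓ).1 hℓ; omega⟩
  have hsup_mem := Nat.sSup_mem ⟨0, hS0⟩ hBdd
  set ℓ := sSup S with hℓdef
  obtain ⟨hub, hper⟩ := (hmemiff ℓ).1 hsup_mem
  have hnot : ℓ + 1 ∉ S := fun h => by have := le_csSup hBdd h; omega
  have hlow : 3*τ-1-p ∈ S := by
    refine (hmemiff _).2 ⟨by omega, fun t ht => ?_⟩
    have h := hP t (by omega)
    convert h using 2 <;> omega
  have hlb : 3*τ-1-p ≤ ℓ := le_csSup hBdd hlow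
  refine ⟨ℓ, hrun, by omega, hub, hper, ?_⟩
  by_cases hend : i + p + ℓ + 1 ≤ n + 1
  · right
    intro heq
    apply hnot
    refine (hmemiff (ℓ+1)).2 ⟨by omega, fun t ht => ?_⟩
    rcases Nat.lt_or_ge t ℓ with h | h
    · exact hper t h
    · have ht' : t = ℓ := by omega
      rw [ht']; exact heq
  · left; omega

lemma adj_all [LinearOrder α] (τ n : ℕ) (T : ℕ → α) (hτ : 1 ≤ τ) (i : ℕ)
    (hi : i ∈ Rset τ n T) (hi1 : i + 1 ∈ Rset τ n T) :
    runEndT τ n T (i+1) = runEndT τ n T i ∧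
    i + 3 * τ ≤ runEndT τ n T i ∧ runEndT τ n T i ≤ n + 1 ∧
    (typePosT τ n T (i+1) ↔ typePosT τ n T i) := by
  have hpq := adj_per τ n T hτ i hi hi1
  obtain ⟨hi0, hin, hip⟩ := hi
  obtain ⟨hi0', hin', hip'⟩ := hi1
  obtain ⟨ℓ, hr, hlb, hub, hper, hmax⟩ := runend_spec τ n T hτ i ⟨hi0, hin, hip⟩
  obtain ⟨ℓ', hr', hlb', hub', hper', hmax'⟩ := runend_spec τ n T hτ (i+1) ⟨hi0', hin', hip'⟩
  rw [hpq] at hr' hlb' hub' hper' hmax'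
  set p := perP (sufP T i) (3*τ-1) with hpdef
  have hp0 : 0 < p := (perP_mem _ _).1
  have hℓ1 : 1 ≤ ℓ := by omega
  have hle1 : ℓ' + 1 ≤ ℓ := by
    by_contra hcon
    push_neg at hcon
    rcases hmax with hend | hne
    · omega
    · apply hne
      have h := hper' (ℓ-1) (by omega)
      convert h using 2 <;> omega
  have hge : ℓ ≤ ℓ' + 1 := by
    by_contra hcon
    push_neg at hcon
    rcases hmax' with hend | hne
    · omega
    · apply hne
      have h := hper (ℓ'+1) (by omega)
      convert h using 2 <;> omega
  have hrE : runEndT τ n T i = i + p + ℓ := by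
    show i + runendP τ (sufP T i) (n+1-i) - 1 = i + p + ℓ
    rw [hr]; omega
  have hrE' : runEndT τ n T (i+1) = i + p + ℓ := by
    show (i+1) + runendP τ (sufP T (i+1)) (n+1-(i+1)) - 1 = i + p + ℓ
    rw [hr']; omega
  refine ⟨by rw [hrE, hrE'], by rw [hrE]; omega, by rw [hrE]; omega, ?_⟩
  show typePosP τ (sufP T (i+1)) (n+1-(i+1)) ↔ typePosP τ (sufP T i) (n+1-i)
  unfold typePosP
  rw [hr, hr', hpq]
  have c1 : sufP T (i+1) (1 + p + ℓ' - p) = T (i + ℓ) := by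
    simp only [sufP]; congr 1; omega
  have c2 : sufP T (i+1) (1 + p + ℓ') = T (i + p + ℓ) := by
    simp only [sufP]; congr 1; omega
  have c3 : sufP T i (1 + p + ℓ - p) = T (i + ℓ) := by
    simp only [sufP]; congr 1; omega
  have c4 : sufP T i (1 + p + ℓ) = T (i + p + ℓ) := by
    simp only [sufP]; congr 1; omega
  rw [c1, c2, c3, c4]
  constructor
  · rintro ⟨h1, h2⟩; exact ⟨by omega, h2⟩
  · rintro ⟨h1, h2⟩; exact ⟨by omega, h2⟩

end LZP


open LZ in
/-- Let `τ ∈ [1..⌊n/2⌋]` and assume `T[n]` does not occur in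
`T[1..n)`. If `j ∈ RMin⁻(τ,T)` and `j - 1 ∈ R(τ,T)`, then `j - 1 ∈ RMin⁻(τ,T)`. -/
theorem rmin_propagates_left {α : Type*} [LinearOrder α] (τ n : ℕ) (T : ℕ → α)
    (hτ : 1 ≤ τ) (hn : 2 * τ ≤ n)
    (hlast : ∀ i, 1 ≤ i → i < n → T i ≠ T n)
    (j : ℕ) (hj : j ∈ RMinMinus τ n T) (hj' : j - 1 ∈ Rset τ n T) :
    j - 1 ∈ RMinMinus τ n T := by
  classical
  simp only [RMinMinus, Set.mem_setOf_eq] at hj ⊢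
  obtain ⟨hjRM, hjInf⟩ := hj
  obtain ⟨hjR, hjT⟩ := hjRM
  have h1j : 1 ≤ j - 1 := hj'.1
  obtain ⟨i, rfl⟩ : ∃ i, j = i + 1 := ⟨j - 1, by omega⟩
  simp only [Nat.add_sub_cancel] at hj' ⊢
  obtain ⟨hEq, hE3, hEn, hTiff⟩ := LZP.adj_all τ n T hτ i hj' hjR
  have htypei : ¬ typePosT τ n T i := fun h => hjT (hTiff.2 h)
  have hclaim : ∀ q, q ∈ OccSub T n i (runEndT τ n T i - i) ∩ RsetMinus τ n T → i ≤ q := by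
    rintro q ⟨⟨hq1, hq2, hq3⟩, hqR, hqT⟩
    by_contra hqi
    push_neg at hqi
    obtain ⟨hi0, hin1, hip1⟩ := hjR
    have hwin : ∀ t < 3*τ-1, T (q + 1 + t) = T (i + 1 + t) := by
      intro t ht
      have h := hq3 (t+1) (by omega)
      convert h using 2 <;> omega
    have hperq : perP (sufP T (q+1)) (3*τ-1) = perP (sufP T (i+1)) (3*τ-1) :=
      LZP.perP_congr_T T (q+1) (i+1) (3*τ-1) hwin
    have hq1R : q + 1 ∈ Rset τ n T := ⟨by omega, by omega, by rw [hperq]; exact hip1⟩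
    have B := LZP.adj_all τ n T hτ q hqR hq1R
    have hq1T : ¬ typePosT τ n T (q+1) := fun h => hqT (B.2.2.2.1 h)
    have hmem : q + 1 ∈ OccSub T n (i+1) (runEndT τ n T (i+1) - (i+1)) ∩ RsetMinus τ n T := by
      refine ⟨⟨by omega, ?_, ?_⟩, hq1R, hq1T⟩
      · rw [hEq]; omega
      · intro t ht
        rw [hEq] at ht
        have h := hq3 (t+1) (by omega)
        convert h using 2 <;> omega
    have hle := Nat.sInf_le hmem
    rw [← hjInf] at hle
    omega
  have himem : i ∈ OccSub T n i (runEndT τ n T i - i) ∩ RsetMinus τ n T := by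
    exact ⟨⟨hj'.1, by omega, fun t _ => rfl⟩, hj', htypei⟩
  refine ⟨⟨hj', htypei⟩, ?_⟩
  have hne : (OccSub T n i (runEndT τ n T i - i) ∩ RsetMinus τ n T).Nonempty := ⟨i, himem⟩
  have h1 := Nat.sInf_mem hne
  have h2 := hclaim _ h1
  have h3 := Nat.sInf_le himem
  omega
end

section
/- Let τ ∈ [1..⌊n/2⌋] and j ∈ R'⁻(τ,T) (the start of a maximal type -1 run). Then emin(j) - j ≤ min(p, r), where p = |root_T(j)|, r = e(j) - j - 3τ + 2, and emin(j) = max{j' ∈ [j..n] : [j..j') ⊆ RMin⁻(τ,T)}. -/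
section Helpers

open LZ

variable {α : Type*}

private lemma sufP_apply (T : ℕ → α) (k a b : ℕ) (h : k + a = b + 1) :
    sufP T k a = T b := by
  unfold sufP; congr 1; omega

private lemma perP_spec (P : ℕ → α) (ℓ : ℕ) (hℓ : 0 < ℓ) :
    0 < perP P ℓ ∧ ∀ t, t + perP P ℓ < ℓ → P (1 + t) = P (1 + t + perP P ℓ) := by
  have hne : ({p | 0 < p ∧ ∀ t, t + p < ℓ → P (1 + t) = P (1 + t + p)} : Set ℕ).Nonempty :=
    ⟨ℓ, hℓ, fun t ht => absurd ht (by omega)⟩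
  have h := Nat.sInf_mem hne
  exact h

private lemma runend_spec (τ : ℕ) (P : ℕ → α) (m : ℕ)
    (hpm : perP P (3 * τ - 1) ≤ m) :
    ∃ L, runendP τ P m = 1 + perP P (3 * τ - 1) + L ∧
      perP P (3 * τ - 1) + L ≤ m ∧
      (∀ t < L, P (1 + t) = P (1 + perP P (3 * τ - 1) + t)) ∧
      (perP P (3 * τ - 1) + L + 1 ≤ m →
        ∃ t < L + 1, P (1 + t) ≠ P (1 + perP P (3 * τ - 1) + t)) ∧
      (∀ ℓ, perP P (3 * τ - 1) + ℓ ≤ m →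
        (∀ t < ℓ, P (1 + t) = P (1 + perP P (3 * τ - 1) + t)) → ℓ ≤ L) := by
  set S : Set ℕ :=
    {ℓ | perP P (3 * τ - 1) + ℓ ≤ m ∧
      ∀ t < ℓ, P (1 + t) = P (1 + perP P (3 * τ - 1) + t)} with hS
  have hbdd : BddAbove S := ⟨m, fun x hx => le_trans (Nat.le_add_left x _) hx.1⟩
  have hne : S.Nonempty := ⟨0, by simp [hS, hpm]⟩
  have hmem := Nat.sSup_mem hne hbdd
  refine ⟨sSup S, rfl, hmem.1, hmem.2, ?_, ?_⟩
  · intro hm1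
    by_contra hc
    push_neg at hc
    have h2 : sSup S + 1 ∈ S := ⟨by omega, hc⟩
    have := le_csSup hbdd h2
    omega
  · intro ℓ h1 h2
    exact le_csSup hbdd ⟨h1, h2⟩

private lemma rootP_length [LinearOrder α] (τ : ℕ) (P : ℕ → α) :
    (rootP τ P).length = perP P (3 * τ - 1) := by
  unfold rootP
  set p := perP P (3 * τ - 1) with hp
  have h : ∀ (l : List ℕ) (b : List α), b.length = p →
      ((l.map (rotP P p)).foldr min b).length = p := by
    intro l
    induction l with
    | nil => intro b hb; simpa using hb
    | cons a l ih =>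
      intro b hb
      simp only [List.map_cons, List.foldr_cons]
      rcases le_total (rotP P p a) ((l.map (rotP P p)).foldr min b) with h | h
      · rw [min_eq_left h]; simp [rotP]
      · rw [min_eq_right h]; exact ih b hb
  exact h (List.range p) (rotP P p 0) (by simp [rotP])

end Helpers

open LZ in
/-- Let `τ ∈ [1..⌊n/2⌋]` and assume `T[n]` does not occur in
`T[1..n)`. For `j ∈ R'⁻(τ,T)` (a start of a maximal type `-1` run),
`emin(j) - j ≤ min(p, r)` where `p = |root_T(j)|` and `r = e(j) - j - 3τ + 2`. -/
theorem rmin_block_size {α : Type*} [LinearOrder α] (τ n : ℕ) (T : ℕ → α)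
    (hτ : 1 ≤ τ) (hn : 2 * τ ≤ n)
    (hlast : ∀ i, 1 ≤ i → i < n → T i ≠ T n)
    (j : ℕ) (hj : j ∈ RsetMinus τ n T) (hj' : j - 1 ∉ Rset τ n T) :
    eminT τ n T j - j ≤
      min (rootT τ T j).length (runEndT τ n T j + 2 - (j + 3 * τ)) := by
  classical
  obtain ⟨⟨hj1, hj2, hj3⟩, hjty⟩ := id hj
  have hspec := perP_spec (sufP T j) (3 * τ - 1) (by omega)
  obtain ⟨hppos, hper⟩ := hspec
  obtain ⟨L, hrun, hLm, hLeq, hLmax, hLub⟩ :=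
    runend_spec τ (sufP T j) (n + 1 - j) (by omega)
  set p := perP (sufP T j) (3 * τ - 1) with hp
  clear_value p
  -- hj3 : 3 * p ≤ τ
  have hperT : ∀ t, t + p < 3 * τ - 1 → T (j + t) = T (j + t + p) := by
    intro t ht
    have h := hper t ht
    rwa [sufP_apply T j (1 + t) (j + t) (by omega),
      sufP_apply T j (1 + t + p) (j + t + p) (by omega)] at h
  have hLeqT : ∀ t < L, T (j + t) = T (j + p + t) := by
    intro t ht
    have h := hLeq t ht
    rwa [sufP_apply T j (1 + t) (j + t) (by omega),
      sufP_apply T j (1 + p + t) (j + p + t) (by omega)] at h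
  have hL1 : 3 * τ - 1 ≤ p + L := by
    have harg : ∀ t < 3 * τ - 1 - p, sufP T j (1 + t) = sufP T j (1 + p + t) := by
      intro t ht
      have h2 := hper t (by omega)
      have h3 : 1 + t + p = 1 + p + t := by omega
      rwa [h3] at h2
    have h := hLub (3 * τ - 1 - p) (by omega) harg
    omega
  -- run maximality : T (j+L) ≠ T (j+p+L) and run end ≤ n
  have hkey : j + p + L ≤ n ∧ T (j + L) ≠ T (j + p + L) := by
    by_cases hcase : p + L + 1 ≤ n + 1 - j
    · obtain ⟨t, ht, hneq⟩ := hLmax hcase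
      have ht' : t = L := by
        by_contra h
        exact hneq (hLeq t (by omega))
      subst ht'
      rw [sufP_apply T j (1 + t) (j + t) (by omega),
        sufP_apply T j (1 + p + t) (j + p + t) (by omega)] at hneq
      exact ⟨by omega, hneq⟩
    · exfalso
      have hLpos : 1 ≤ L := by omega
      have h := hLeqT (L - 1) (by omega)
      have hn' : j + p + (L - 1) = n := by
        clear h hLeq hLmax hLub hper hperT hLeqT hlast hj hj' hjty hrun hp
        omega
      rw [hn'] at h
      exact hlast (j + (L - 1)) (by omega) (by omega) h
  obtain ⟨hEn, hneT⟩ := hkey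
  -- general bound on eminT via a single excluded position
  have hbound : ∀ q, j ≤ q → q ∉ RMinMinus τ n T → eminT τ n T j ≤ q := by
    intro q hq hqn
    unfold eminT
    refine csSup_le ⟨j, le_refl j, by omega, fun t h1 h2 => absurd h2 (Nat.not_lt.mpr h1)⟩ ?_
    intro x hx
    obtain ⟨hx1, hx2, hx3⟩ := hx
    by_contra hc
    push_neg at hc
    exact hqn (hx3 q hq hc)
  -- bound 1 : j + p ∉ RMinMinus
  have hnot1 : j + p ∉ RMinMinus τ n T := by
    intro hmem
    obtain ⟨⟨⟨hq1, hq2, hq3⟩, hqty⟩, hmemInf⟩ := hmem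
    have hspec2 := perP_spec (sufP T (j + p)) (3 * τ - 1) (by omega)
    obtain ⟨hp2pos, hp2per⟩ := hspec2
    obtain ⟨L₂, hrun₂, hL₂m, hL₂eq, _, _⟩ :=
      runend_spec τ (sufP T (j + p)) (n + 1 - (j + p)) (by omega)
    set p₂ := perP (sufP T (j + p)) (3 * τ - 1) with hp2
    clear_value p₂
    have hL₂T : ∀ t < L₂, T (j + p + t) = T (j + p + p₂ + t) := by
      intro t ht
      have h := hL₂eq t ht
      rwa [sufP_apply T (j + p) (1 + t) (j + p + t) (by omega),
        sufP_apply T (j + p) (1 + p₂ + t) (j + p + p₂ + t) (by omega)] at h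
    have hle : p₂ + L₂ ≤ L := by
      by_contra hgt
      push_neg at hgt
      have ha := hL₂T (L - p₂) (by omega)
      have hb := hLeqT (L - p₂) (by omega)
      have hc := hL₂T (L - p₂ - p) (by omega)
      have ea2 : j + p + p₂ + (L - p₂) = j + p + L := by omega
      have ec1 : j + p + (L - p₂ - p) = j + (L - p₂) := by omega
      have ec2 : j + p + p₂ + (L - p₂ - p) = j + L := by omega
      rw [ea2] at ha
      rw [ec1, ec2] at hc
      exact hneT (hc.symm.trans (hb.trans ha))
    have hET : runEndT τ n T (j + p) = j + p + p₂ + L₂ := by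
      unfold runEndT
      rw [hrun₂]
      omega
    rw [hET] at hmemInf
    rw [show j + p + p₂ + L₂ - (j + p) = p₂ + L₂ from by omega] at hmemInf
    have hjin : j ∈ OccSub T n (j + p) (p₂ + L₂) ∩ RsetMinus τ n T := by
      refine ⟨⟨hj1, by omega, ?_⟩, hj⟩
      intro t ht
      exact hLeqT t (by omega)
    have hinf := Nat.sInf_le hjin
    rw [← hmemInf] at hinf
    omega
  -- bound 2 : the position past the run's R-zone is not even in Rset
  have hnot2 : ∀ q, q = j + (p + L - (3 * τ - 2)) → q ∉ RMinMinus τ n T := by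
    intro q hqdef hmem
    obtain ⟨hq1, hq2, hq3⟩ := hmem.1.1
    have hspec' := perP_spec (sufP T q) (3 * τ - 1) (by omega)
    obtain ⟨hp'pos, hp'per⟩ := hspec'
    set p' := perP (sufP T q) (3 * τ - 1) with hp'
    clear_value p'
    have hwin : ∀ t, t + p' < 3 * τ - 1 → T (q + t) = T (q + t + p') := by
      intro t ht
      have h := hp'per t ht
      rwa [sufP_apply T q (1 + t) (q + t) (by omega),
        sufP_apply T q (1 + t + p') (q + t + p') (by omega)] at h
    have ha := hwin (3 * τ - 2 - p') (by omega)
    have hbr := hLeqT (L - p') (by omega)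
    have hcw := hwin (3 * τ - 2 - p' - p) (by omega)
    have e1 : q + (3 * τ - 2 - p') = j + (p + L - p') := by omega
    have e2 : q + (3 * τ - 2 - p') + p' = j + p + L := by omega
    have e3 : j + p + (L - p') = j + (p + L - p') := by omega
    have e4 : q + (3 * τ - 2 - p' - p) = j + (L - p') := by omega
    have e5 : q + (3 * τ - 2 - p' - p) + p' = j + L := by omega
    rw [e2, e1] at ha
    rw [e3] at hbr
    rw [e5, e4] at hcw
    exact hneT (hcw.symm.trans (hbr.trans ha))
  have hb1 : eminT τ n T j ≤ j + p := hbound (j + p) (by omega) hnot1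
  have hb2 : eminT τ n T j ≤ j + (p + L - (3 * τ - 2)) :=
    hbound _ (by omega) (hnot2 _ rfl)
  have hroot : (rootT τ T j).length = p := by
    unfold rootT
    rw [rootP_length]
    exact hp.symm
  have hend : runEndT τ n T j = j + p + L := by
    unfold runEndT
    rw [hrun]
    omega
  rw [hroot, hend]
  omega
end
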